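/- arXiv:2409.17949 — 2 statements merged into one kernel-verified Lean document; each statement's English description precedes it below -/
import Mathlib

section
/- In dimension 4, any tensor C_{abcd} with the algebraic symmetries of a Weyl tensor (antisymmetric in its first and second index pairs, symmetric under pair exchange, satisfying the first Bianchi identity, and totally trace-free) satisfies the dimensionally dependent identity C_{abmp} C^{dbmp} = (1/4) δ_a^d C_{cbmp} C^{cbmp}, where indices are raised with a nondegenerate symmetric bilinear form g. -/
/-!
Raising the last two indices of `C` gives a tensor `W_{ab}{}^{ce}` that is antisymmetric in each
index pair and trace-free. For fixed `p`, wedge the 2-forms `W_{··}{}^{p₁p₂}` and `W_{··}{}^{p₃p₄}`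
and then the 1-form `δ^d`: the result is a 5-form, hence zero in dimension 4. Contracting its
`(a, p₁, …, p₄)` component over `p`, trace-freeness kills all but one term of each wedge
expansion, and what survives is `δ_a^d C_{cbmp} C^{cbmp} - 4 C_{abmp} C^{dbmp} = 0`.
-/

open Finset

variable {ι R : Type*} [CommRing R]

section Wedge

/-- Components of `f ∧ g` for 2-forms given by antisymmetric matrices `f`, `g`. -/
def wedge₂₂ (f g : ι → ι → R) (x₁ x₂ x₃ x₄ : ι) : R :=
  f x₁ x₂ * g x₃ x₄ - f x₁ x₃ * g x₂ x₄ + f x₁ x₄ * g x₂ x₃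
    + f x₂ x₃ * g x₁ x₄ - f x₂ x₄ * g x₁ x₃ + f x₃ x₄ * g x₁ x₂

def wedge₁₄ (e : ι → R) (ω : ι → ι → ι → ι → R) (x₀ x₁ x₂ x₃ x₄ : ι) : R :=
  e x₀ * ω x₁ x₂ x₃ x₄ - e x₁ * ω x₀ x₂ x₃ x₄ + e x₂ * ω x₀ x₁ x₃ x₄
    - e x₃ * ω x₀ x₁ x₂ x₄ + e x₄ * ω x₀ x₁ x₂ x₃

theorem wedge₂₂_comm (f g : ι → ι → R) : wedge₂₂ f g = wedge₂₂ g f := by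
  ext; unfold wedge₂₂; ring

theorem wedge₂₂_cycle {f g : ι → ι → R} (hf : ∀ x y, f x y = -f y x)
    (hg : ∀ x y, g x y = -g y x) (x₁ x₂ x₃ x₄ : ι) :
    wedge₂₂ f g x₁ x₃ x₄ x₂ = wedge₂₂ f g x₁ x₂ x₃ x₄ := by
  unfold wedge₂₂
  rw [hf x₄ x₂, hf x₃ x₂, hg x₄ x₂, hg x₃ x₂]
  ring

/- Two of the five indices coincide by pigeonhole; with the 2-forms written as `a - aᵀ`,
the cancellation this forces is a ring identity. -/
theorem wedge₁₄_wedge₂₂_sub_transpose_eq_zero [Fintype ι] (hι : Fintype.card ι ≤ 4)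
    (e : ι → R) (a b : ι → ι → R) (x₀ x₁ x₂ x₃ x₄ : ι) :
    wedge₁₄ e (wedge₂₂ (fun x y ↦ a x y - a y x) (fun x y ↦ b x y - b y x))
      x₀ x₁ x₂ x₃ x₄ = 0 := by
  obtain ⟨i, j, hij, hx⟩ := Fintype.exists_ne_map_eq_of_card_lt ![x₀, x₁, x₂, x₃, x₄]
    (by simpa using Nat.lt_succ_of_le hι)
  unfold wedge₁₄ wedge₂₂
  fin_cases i <;> fin_cases j <;> simp at hij hx <;> subst hx <;> ring

theorem wedge₁₄_wedge₂₂_eq_zero [Fintype ι] [Invertible (2 : R)] (hι : Fintype.card ι ≤ 4)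
    {f g : ι → ι → R} (hf : ∀ x y, f x y = -f y x) (hg : ∀ x y, g x y = -g y x)
    (e : ι → R) (x₀ x₁ x₂ x₃ x₄ : ι) : wedge₁₄ e (wedge₂₂ f g) x₀ x₁ x₂ x₃ x₄ = 0 := by
  have half : ∀ h : ι → ι → R, (∀ x y, h x y = -h y x) →
      h = fun x y ↦ ⅟2 * h x y - ⅟2 * h y x := fun h hh ↦ by
    ext x y
    rw [hh y x]
    linear_combination (-h x y) * invOf_mul_self (2 : R)
  rw [half f hf, half g hg]
  exact wedge₁₄_wedge₂₂_sub_transpose_eq_zero hι e _ _ x₀ x₁ x₂ x₃ x₄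

end Wedge

section Contraction

variable [Fintype ι]

def contractSq (W : ι → ι → ι → ι → R) (a d : ι) : R :=
  ∑ b, ∑ c, ∑ e, W a b c e * W c e d b

variable {W : ι → ι → ι → ι → R}

theorem sum_wedge₂₂_eq_contractSq (hW₁ : ∀ a b c d, W a b c d = -W b a c d)
    (hW₂ : ∀ a b c d, W a b c d = -W a b d c) (htr : ∀ b d, ∑ a, W a b a d = 0) (a d : ι) :
    ∑ b, ∑ c, ∑ e, wedge₂₂ (fun x y ↦ W x y d b) (fun x y ↦ W x y c e) a b c e
      = contractSq W a d := by
  have htr₂₄ : ∀ i h, ∑ g, W i g h g = 0 := fun i h ↦ by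
    simpa [hW₁ _ i, hW₂ _ _ h] using htr i h
  have htr₂₃ : ∀ i h, ∑ g, W i g g h = 0 := fun i h ↦ by
    simpa [hW₁ _ i] using htr i h
  have hvanish₁ : ∑ b, ∑ c, ∑ e, W a e d b * W b c c e = 0 := sum_eq_zero fun b _ ↦ by
    rw [sum_comm]; simp only [← mul_sum, htr₂₃, mul_zero, sum_const_zero]
  have hvanish₂ : ∑ b, ∑ c, ∑ e, W b e d b * W a c c e = 0 := sum_eq_zero fun b _ ↦ by
    rw [sum_comm]; simp only [← mul_sum, htr₂₃, mul_zero, sum_const_zero]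
  unfold wedge₂₂ contractSq
  simp only [sum_add_distrib, sum_sub_distrib, ← mul_sum, htr₂₄, mul_zero, sum_const_zero]
  rw [hvanish₁, hvanish₂]
  simp only [sub_zero, zero_add, mul_comm (W _ _ d _)]

theorem four_mul_contractSq [DecidableEq ι] [Invertible (2 : R)] (hι : Fintype.card ι ≤ 4)
    (hW₁ : ∀ a b c d, W a b c d = -W b a c d) (hW₂ : ∀ a b c d, W a b c d = -W a b d c)
    (htr : ∀ b d, ∑ a, W a b a d = 0) (a d : ι) :
    4 * contractSq W a d = (if a = d then 1 else 0) * ∑ c, contractSq W c c := by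
  let Ω : ι → ι → ι → ι → ι → ι → ι → ι → R := fun p₁ p₂ p₃ p₄ ↦
    wedge₂₂ (fun x y ↦ W x y p₁ p₂) (fun x y ↦ W x y p₃ p₄)
  have hvanish : ∑ p₁, ∑ p₂, ∑ p₃, ∑ p₄,
      wedge₁₄ (fun x ↦ if x = d then 1 else 0) (Ω p₁ p₂ p₃ p₄) a p₁ p₂ p₃ p₄ = 0 :=
    sum_eq_zero fun _ _ ↦ sum_eq_zero fun _ _ ↦ sum_eq_zero fun _ _ ↦ sum_eq_zero fun _ _ ↦
      wedge₁₄_wedge₂₂_eq_zero hι (fun _ _ ↦ hW₁ _ _ _ _) (fun _ _ ↦ hW₁ _ _ _ _) _ _ _ _ _ _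
  have hS : ∀ a d, ∑ b, ∑ c, ∑ e, Ω d b c e a b c e = contractSq W a d :=
    sum_wedge₂₂_eq_contractSq hW₁ hW₂ htr
  have hswap : ∀ p q r s x₁ x₂ x₃ x₄, Ω q p r s x₁ x₂ x₃ x₄ = -Ω p q r s x₁ x₂ x₃ x₄ := by
    intro p q r s x₁ x₂ x₃ x₄
    simp only [Ω, wedge₂₂, hW₂ _ _ q p]
    ring
  have hpair : ∀ p q r s x₁ x₂ x₃ x₄, Ω p q r s x₁ x₂ x₃ x₄ = Ω r s p q x₁ x₂ x₃ x₄ := by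
    intro p q r s x₁ x₂ x₃ x₄
    simp only [Ω, wedge₂₂_comm (fun x y ↦ W x y p q)]
  have hcycle : ∀ p q r s x₁ x₂ x₃ x₄, Ω p q r s x₁ x₃ x₄ x₂ = Ω p q r s x₁ x₂ x₃ x₄ :=
    fun _ _ _ _ ↦ wedge₂₂_cycle (fun _ _ ↦ hW₁ _ _ _ _) (fun _ _ ↦ hW₁ _ _ _ _)
  have hslot₂ : ∑ p, ∑ q, ∑ r, Ω p d q r a p q r = -contractSq W a d := by
    simp only [hswap d, sum_neg_distrib, hS]
  have hslot₃ : ∑ p, ∑ q, ∑ r, Ω p q d r a p q r = contractSq W a d :=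
    calc ∑ p, ∑ q, ∑ r, Ω p q d r a p q r = ∑ p, ∑ q, ∑ r, Ω d r p q a r p q := by
          simp only [hpair _ _ d, hcycle]
      _ = ∑ r, ∑ p, ∑ q, Ω d r p q a r p q := (sum_congr rfl fun _ _ ↦ sum_comm).trans sum_comm
      _ = contractSq W a d := hS a d
  have hslot₄ : ∑ p, ∑ q, ∑ r, Ω p q r d a p q r = -contractSq W a d := by
    have h : ∀ p q r, Ω p q r d a p q r = -Ω p q d r a p q r := fun p q r ↦ by
      rw [hpair p q r d, hswap d r, hpair d r p q]
    simp only [h, sum_neg_distrib, hslot₃]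
  unfold wedge₁₄ at hvanish
  simp only [sum_add_distrib, sum_sub_distrib, boole_mul, sum_ite_irrel, sum_const_zero,
    Fintype.sum_ite_eq', hS, hslot₂, hslot₃, hslot₄] at hvanish
  rw [boole_mul]
  split_ifs at hvanish ⊢ <;> linear_combination -hvanish

end Contraction

section Raising

theorem left_inverse_symm {n : Type*} [Fintype n] [DecidableEq n] {g ginv : n → n → R}
    (hg : ∀ a b, g a b = g b a) (hinv : ∀ a b, ∑ c, ginv a c * g c b = if a = b then 1 else 0)
    (a b : n) : ginv a b = ginv b a := by
  have hmul : Matrix.of ginv * Matrix.of g = 1 := by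
    ext i j; simpa [Matrix.mul_apply, Matrix.one_apply] using hinv i j
  have hsymm : (Matrix.of ginv).IsSymm := by
    rw [← Matrix.inv_eq_left_inv hmul]
    exact Matrix.IsSymm.inv (Matrix.IsSymm.ext fun i j ↦ hg j i)
  exact hsymm.apply b a

variable [Fintype ι]

theorem sum_comm_pairs {M : Type*} [AddCommMonoid M] (f : ι → ι → ι → ι → M) :
    ∑ i, ∑ j, ∑ k, ∑ l, f i j k l = ∑ k, ∑ l, ∑ i, ∑ j, f i j k l :=
  calc ∑ i, ∑ j, ∑ k, ∑ l, f i j k l = ∑ x : ι × ι, ∑ y : ι × ι, f x.1 x.2 y.1 y.2 := by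
        simp only [Fintype.sum_prod_type]
    _ = ∑ y : ι × ι, ∑ x : ι × ι, f x.1 x.2 y.1 y.2 := sum_comm
    _ = ∑ k, ∑ l, ∑ i, ∑ j, f i j k l := by simp only [Fintype.sum_prod_type]

variable {u : ι → ι → R}

theorem sum_mul_raise_eq_sum_raise_mul (hu : ∀ i j, u i j = u j i) (X Y : ι → ι → R) :
    ∑ m, ∑ p, X m p * ∑ m', ∑ p', u m m' * u p p' * Y m' p'
      = ∑ m', ∑ p', (∑ m, ∑ p, u m' m * u p' p * X m p) * Y m' p' := by
  simp only [mul_sum, sum_mul]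
  rw [sum_comm_pairs]
  refine sum_congr rfl fun m' _ ↦ sum_congr rfl fun p' _ ↦ sum_congr rfl fun m _ ↦
    sum_congr rfl fun p _ ↦ ?_
  rw [hu m m', hu p p']
  ring

variable (u) (C : ι → ι → ι → ι → R)

def raiseLast (a b c d : ι) : R := ∑ c', ∑ d', u c c' * u d d' * C a b c' d'

variable {u C}

theorem raiseLast_antisymm_left (hC : ∀ a b c d, C a b c d = -C b a c d) (a b c d : ι) :
    raiseLast u C a b c d = -raiseLast u C b a c d := by
  simp only [raiseLast, hC a b, mul_neg, sum_neg_distrib]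

theorem raiseLast_antisymm_right (hC : ∀ a b c d, C a b c d = -C a b d c) (a b c d : ι) :
    raiseLast u C a b c d = -raiseLast u C a b d c := by
  simp only [raiseLast, ← sum_neg_distrib]
  rw [sum_comm]
  refine sum_congr rfl fun x _ ↦ sum_congr rfl fun y _ ↦ ?_
  rw [hC a b y x]
  ring

theorem sum_raiseLast_trace (htr : ∀ b d, ∑ a, ∑ c, u a c * C a b c d = 0) (b d : ι) :
    ∑ a, raiseLast u C a b a d = 0 := by
  simp only [raiseLast]
  rw [(sum_congr rfl fun _ _ ↦ sum_comm).trans sum_comm]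
  refine sum_eq_zero fun d' _ ↦ ?_
  simp only [mul_right_comm _ (u d d'), ← sum_mul, htr, zero_mul]

theorem contractSq_raiseLast (hu : ∀ i j, u i j = u j i)
    (hC : ∀ a b c d, C a b c d = C c d a b) (a d : ι) :
    contractSq (raiseLast u C) a d = ∑ b, ∑ m, ∑ p, C a b m p *
      (∑ d', ∑ b', ∑ m', ∑ p', u d d' * u b b' * u m m' * u p p' * C d' b' m' p') := by
  have hraise : ∀ b m p, ∑ d', ∑ b', ∑ m', ∑ p', u d d' * u b b' * u m m' * u p p' * C d' b' m' p'
      = ∑ m', ∑ p', u m m' * u p p' * raiseLast u C m' p' d b := by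
    intro b m p
    simp only [raiseLast, mul_sum]
    rw [sum_comm_pairs]
    refine sum_congr rfl fun _ _ ↦ sum_congr rfl fun _ _ ↦ sum_congr rfl fun d' _ ↦
      sum_congr rfl fun _ _ ↦ ?_
    rw [hC d']
    ring
  simp only [hraise, sum_mul_raise_eq_sum_raise_mul hu, contractSq, raiseLast]

end Raising

theorem weyl_dim4_identity_general
    (g ginv : Fin 4 → Fin 4 → ℝ)
    (hgsym : ∀ a b, g a b = g b a)
    (hinv : ∀ a b, ∑ c, ginv a c * g c b = if a = b then (1 : ℝ) else 0)
    (C : Fin 4 → Fin 4 → Fin 4 → Fin 4 → ℝ)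
    (hanti1 : ∀ a b c d, C a b c d = - C b a c d)
    (hanti2 : ∀ a b c d, C a b c d = - C a b d c)
    (hpair : ∀ a b c d, C a b c d = C c d a b)
    (htracefree : ∀ b d, ∑ a, ∑ c, ginv a c * C a b c d = 0)
    (a d : Fin 4) :
    (∑ b, ∑ m, ∑ p, C a b m p *
      (∑ d', ∑ b', ∑ m', ∑ p',
        ginv d d' * ginv b b' * ginv m m' * ginv p p' * C d' b' m' p'))
    = (1/4) * (if a = d then (1 : ℝ) else 0) *
      (∑ c, ∑ b, ∑ m, ∑ p, C c b m p *
        (∑ c', ∑ b', ∑ m', ∑ p',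
          ginv c c' * ginv b b' * ginv m m' * ginv p p' * C c' b' m' p')) := by
  have hu := left_inverse_symm hgsym hinv
  have key := four_mul_contractSq (Fintype.card_fin 4).le (raiseLast_antisymm_left hanti1)
    (raiseLast_antisymm_right hanti2) (sum_raiseLast_trace htracefree) a d
  simp only [← contractSq_raiseLast hu hpair]
  linear_combination key / 4

/-- **Dimensionally dependent identity for Weyl-type tensors in dimension 4.**
Let `g` be a nondegenerate symmetric bilinear form on a 4-dimensional space
(components `g a b`, inverse `ginv`).  Any (0,4)-tensor `C` with the algebraic
symmetries of a Weyl tensor (antisymmetry in both index pairs, symmetry under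
pair exchange, first Bianchi identity, total trace-freeness) satisfies
`C_{abmp} C^{dbmp} = (1/4) δ_a^d C_{cbmp} C^{cbmp}`,
where indices are raised with `ginv`. -/
theorem weyl_dim4_identity
    (g ginv : Fin 4 → Fin 4 → ℝ)
    (hgsym : ∀ a b, g a b = g b a)
    (hinv : ∀ a b, ∑ c, ginv a c * g c b = if a = b then (1 : ℝ) else 0)
    (C : Fin 4 → Fin 4 → Fin 4 → Fin 4 → ℝ)
    (hanti1 : ∀ a b c d, C a b c d = - C b a c d)
    (hanti2 : ∀ a b c d, C a b c d = - C a b d c)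
    (hpair : ∀ a b c d, C a b c d = C c d a b)
    (hbianchi : ∀ a b c d, C a b c d + C a c d b + C a d b c = 0)
    (htracefree : ∀ b d, ∑ a, ∑ c, ginv a c * C a b c d = 0)
    (a d : Fin 4) :
    (∑ b, ∑ m, ∑ p, C a b m p *
      (∑ d', ∑ b', ∑ m', ∑ p',
        ginv d d' * ginv b b' * ginv m m' * ginv p p' * C d' b' m' p'))
    = (1/4) * (if a = d then (1 : ℝ) else 0) *
      (∑ c, ∑ b, ∑ m, ∑ p, C c b m p *
        (∑ c', ∑ b', ∑ m', ∑ p',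
          ginv c c' * ginv b b' * ginv m m' * ginv p p' * C c' b' m' p')) :=
  weyl_dim4_identity_general g ginv hgsym hinv C hanti1 hanti2 hpair htracefree a d
end

section
/- Let K_{a₁…a_p} be a covariant tensor field with K̃ = Θ^s K under the conformal change g = Θ² g̃, and assume C·C ≠ 0 everywhere. Then the operator D^{s,(0,p)}_b K_{a₁…a_p} = ∇_b K_{a₁…a_p} + Σ_{j=1}^p M^{c}{}_{b a_j}(Λ, g, p, s) K_{a₁…c…a_p}, where M^c{}_{ba}(Λ,g,p,s) = ((s+p)/p) Λ_b δ_a^c + Λ_a δ_b^c − g_{ab} g^{cd} Λ_d, satisfies D̃^{s,(0,p)}_b K̃_{a₁…a_p} = Θ^s D^{s,(0,p)}_b K_{a₁…a_p}. -/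
/-! The weight `s` of `K` enters twice: differentiating `K̃ = Θ^s K` produces `s Υ_b K`, while each of
the `p` slots of `K` picks up `-(s/p) Υ_b K` from the change of `M - Γ` (its remaining terms cancel
against the transition tensor because `g_{ab} g^{cd}` is conformally invariant). -/

open Finset

noncomputable section

/-- Kronecker delta. -/
def kd (a b : Fin 4) : ℝ := if a = b then 1 else 0

/-- The tensor `M^c{}_{ba}(Λ, g, p, s) = ((s+p)/p) Λ_b δ_a^c + Λ_a δ_b^c − g_{ab} g^{cd} Λ_d`. -/
def Mtensor {M : Type*} (g ginv : M → Fin 4 → Fin 4 → ℝ) (Λ : M → Fin 4 → ℝ)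
    (p : ℕ) (s : ℤ) (x : M) (c b a : Fin 4) : ℝ :=
  (((s : ℝ) + p) / p) * Λ x b * kd a c + Λ x a * kd b c
    - g x a b * ∑ d, ginv x c d * Λ x d

/-- Covariant derivative `∇_b K_{a₁…a_p}` of a rank-`p` covariant tensor w.r.t.
Christoffel-type symbols `Γ` (with `pd` the differential on scalars). -/
def covdP {M : Type*} {p : ℕ} (pd : (M → ℝ) → M → Fin 4 → ℝ)
    (Γ : M → Fin 4 → Fin 4 → Fin 4 → ℝ) (K : M → (Fin p → Fin 4) → ℝ)
    (x : M) (b : Fin 4) (as : Fin p → Fin 4) : ℝ :=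
  pd (fun y => K y as) x b
    - ∑ j : Fin p, ∑ e, Γ x e b (as j) * K x (Function.update as j e)

/-- The conformal pseudo-differential
`D^{s,(0,p)}_b K_{a₁…a_p} = ∇_b K_{a₁…a_p} + Σ_j M^c{}_{b a_j}(Λ,g,p,s) K_{a₁…c…a_p}`. -/
def Dop {M : Type*} {p : ℕ} (pd : (M → ℝ) → M → Fin 4 → ℝ)
    (Γ : M → Fin 4 → Fin 4 → Fin 4 → ℝ) (g ginv : M → Fin 4 → Fin 4 → ℝ)
    (Λ : M → Fin 4 → ℝ) (s : ℤ) (K : M → (Fin p → Fin 4) → ℝ)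
    (x : M) (b : Fin 4) (as : Fin p → Fin 4) : ℝ :=
  covdP pd Γ K x b as
    + ∑ j : Fin p, ∑ c, Mtensor g ginv Λ p s x c b (as j) * K x (Function.update as j c)

theorem kd_sum_mul (a : Fin 4) (f : Fin 4 → ℝ) : ∑ c, kd a c * f c = f a := by
  simp [kd, ite_mul]

theorem sum_kd_mul_update {p : ℕ} (K : (Fin p → Fin 4) → ℝ) (as : Fin p → Fin 4) :
    ∑ j : Fin p, ∑ c, kd (as j) c * K (Function.update as j c) = p * K as := by
  simp [kd_sum_mul (as _) (fun c => K (Function.update as _ c))]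

section Conformal

variable {M : Type*}

theorem Dop_eq_pd_add_sum {p : ℕ} (pd : (M → ℝ) → M → Fin 4 → ℝ)
    (Γ : M → Fin 4 → Fin 4 → Fin 4 → ℝ) (g ginv : M → Fin 4 → Fin 4 → ℝ) (Λ : M → Fin 4 → ℝ)
    (s : ℤ) (K : M → (Fin p → Fin 4) → ℝ) (x : M) (b : Fin 4) (as : Fin p → Fin 4) :
    Dop pd Γ g ginv Λ s K x b as = pd (fun y => K y as) x b +
      ∑ j : Fin p, ∑ c, (Mtensor g ginv Λ p s x c b (as j) - Γ x c b (as j)) *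
        K x (Function.update as j c) := by
  simp only [Dop, covdP, sub_mul, sum_sub_distrib]
  ring

theorem pd_zpow_mul (pd : (M → ℝ) → M → Fin 4 → ℝ)
    (hmul : ∀ (f g : M → ℝ) (x : M) (a : Fin 4),
      pd (fun y => f y * g y) x a = f x * pd g x a + g x * pd f x a)
    (Θ : M → ℝ) (s : ℤ) (x : M) (b : Fin 4) (hΘ : Θ x ≠ 0)
    (hpow : pd (fun y => Θ y ^ s) x b = (s : ℝ) * Θ x ^ (s - 1) * pd Θ x b) (f : M → ℝ) :
    pd (fun y => Θ y ^ s * f y) x b = Θ x ^ s * (pd f x b + s * (pd Θ x b / Θ x) * f x) := by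
  rw [hmul, hpow, zpow_sub_one₀ hΘ]
  field_simp

theorem metric_mul_inv_conformal (g ginv gt gtinv : M → Fin 4 → Fin 4 → ℝ) (Θ : M → ℝ) (x : M)
    (hconf : ∀ a b, g x a b = Θ x ^ 2 * gt x a b)
    (hconfinv : ∀ a b, gtinv x a b = Θ x ^ 2 * ginv x a b) (f : Fin 4 → ℝ) (a b c : Fin 4) :
    gt x a b * ∑ d, gtinv x c d * f d = g x a b * ∑ d, ginv x c d * f d := by
  simp only [mul_sum, hconf, hconfinv]
  exact sum_congr rfl fun d _ => by ring

theorem Mtensor_sub_christoffel_conformal {p : ℕ} (hp : (p : ℝ) ≠ 0) (s : ℤ)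
    (g ginv gt gtinv : M → Fin 4 → Fin 4 → ℝ) (Θ : M → ℝ) (x : M)
    (hconf : ∀ a b, g x a b = Θ x ^ 2 * gt x a b)
    (hconfinv : ∀ a b, gtinv x a b = Θ x ^ 2 * ginv x a b)
    (Γ Γt : M → Fin 4 → Fin 4 → Fin 4 → ℝ) (Λ Λt Υ : M → Fin 4 → ℝ)
    (htrans : ∀ c b a, Γ x c b a - Γt x c b a =
      kd b c * Υ x a + kd a c * Υ x b - g x a b * ∑ d, ginv x c d * Υ x d)
    (hkey : ∀ a, Υ x a = Λ x a - Λt x a) (c b a : Fin 4) :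
    Mtensor gt gtinv Λt p s x c b a - Γt x c b a =
      Mtensor g ginv Λ p s x c b a - Γ x c b a - (s / p) * Υ x b * kd a c := by
  have hΛt : ∀ d, Λt x d = Λ x d - Υ x d := fun d => by linarith [hkey d]
  have hΓt : Γt x c b a = Γ x c b a -
      (kd b c * Υ x a + kd a c * Υ x b - g x a b * ∑ d, ginv x c d * Υ x d) := by
    linarith [htrans c b a]
  simp only [Mtensor, hΓt, metric_mul_inv_conformal g ginv gt gtinv Θ x hconf hconfinv, hΛt,
    mul_sub, sum_sub_distrib]
  field_simp
  ring

end Conformal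

/-- **Conformal covariance of the conformal pseudo-differential on covariant tensors.**
Setting: `g = Θ² g̃` (with `g̃^{ab} = Θ² g^{ab}` understood as `gtinv = Θ² ginv`),
Levi-Civita Christoffel symbols `Γ`, `Γt` of `g`, `g̃` related by the transition-tensor
formula `Γ^c{}_{ba} − Γ̃^c{}_{ba} = 2δ_{(b}^cΥ_{a)} − g_{ab}Υ^c`, concomitants `Λ`, `Λ̃`
with `Υ = Λ − Λ̃`.  If `K̃ = Θ^s K` is a conformally covariant covariant tensor of rank
`p ≥ 1` and weight `s`, then `D̃^{s,(0,p)}_b K̃_{a₁…a_p} = Θ^s D^{s,(0,p)}_b K_{a₁…a_p}`. -/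
theorem Dsp_conformally_covariant {M : Type*} {p : ℕ} (hp : 0 < p)
    (pd : (M → ℝ) → M → Fin 4 → ℝ)
    (hmul : ∀ (f g : M → ℝ) (x : M) (a : Fin 4),
      pd (fun y => f y * g y) x a = f x * pd g x a + g x * pd f x a)
    (Θ : M → ℝ) (hΘ : ∀ x, 0 < Θ x)
    (hpow : ∀ (k : ℤ) (x : M) (a : Fin 4),
      pd (fun y => Θ y ^ k) x a = (k : ℝ) * Θ x ^ (k - 1) * pd Θ x a)
    (g ginv gt gtinv : M → Fin 4 → Fin 4 → ℝ)
    (hconf : ∀ x a b, g x a b = Θ x ^ 2 * gt x a b)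
    (hconfinv : ∀ x a b, gtinv x a b = Θ x ^ 2 * ginv x a b)
    (Γ Γt : M → Fin 4 → Fin 4 → Fin 4 → ℝ)
    (Λ Λt Υ : M → Fin 4 → ℝ)
    (hΥ : ∀ x a, Υ x a = pd Θ x a / Θ x)
    (htrans : ∀ x c b a, Γ x c b a - Γt x c b a =
      kd b c * Υ x a + kd a c * Υ x b - g x a b * ∑ d, ginv x c d * Υ x d)
    (hkey : ∀ x a, Υ x a = Λ x a - Λt x a)
    (s : ℤ) (K Kt : M → (Fin p → Fin 4) → ℝ)
    (hK : ∀ x as, Kt x as = Θ x ^ s * K x as)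
    (x : M) (b : Fin 4) (as : Fin p → Fin 4) :
    Dop pd Γt gt gtinv Λt s Kt x b as = Θ x ^ s * Dop pd Γ g ginv Λ s K x b as := by
  have hp' : (p : ℝ) ≠ 0 := Nat.cast_ne_zero.mpr hp.ne'
  have hweight := sum_kd_mul_update (K x) as
  simp only [Dop_eq_pd_add_sum, hK,
    pd_zpow_mul pd hmul Θ s x b (hΘ x).ne' (hpow s x b), ← hΥ,
    Mtensor_sub_christoffel_conformal hp' s g ginv gt gtinv Θ x (hconf x) (hconfinv x) Γ Γt Λ Λt Υ
      (htrans x) (hkey x)]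
  have hsplit : ∀ A e k L : ℝ,
      (A - e * k) * (Θ x ^ s * L) = Θ x ^ s * (A * L) - Θ x ^ s * e * (k * L) :=
    fun _ _ _ _ => by ring
  simp only [hsplit, sum_sub_distrib, ← mul_sum, hweight]
  field_simp
  ring

end
end
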